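/- arXiv:2107.01566 — 7 statements merged into one kernel-verified Lean document; each statement's English description precedes it below -/
import Mathlib

section
/- For a regular language L of index N, and any 1 ≤ k ≤ N, there exists a set H = {h₁, ..., h_k} of k words over Σ such that hᵢ and hⱼ are not Myhill-Nerode equivalent with respect to L for all i ≠ j, and every hᵢ has length at most k − 1. -/
/-- Myhill-Nerode equivalence of two words with respect to a language. -/
def mnEquiv {α : Type} (L : Language α) (h₁ h₂ : List α) : Prop :=
  ∀ t : List α, h₁ ++ t ∈ L ↔ h₂ ++ t ∈ L

def mnSetoid {α : Type} (L : Language α) : Setoid (List α) :=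
  ⟨mnEquiv L, ⟨fun _ _ => Iff.rfl, fun h t => (h t).symm, fun h h' t => (h t).trans (h' t)⟩⟩

/-- The Myhill-Nerode index of a language: the number of equivalence classes. -/
noncomputable def mnIndex {α : Type} (L : Language α) : ℕ := Nat.card (Quotient (mnSetoid L))


/- The classes reachable by words of length at most `m` form an increasing chain. Since the class
of `u ++ [a]` is determined by the class of `u`, once the chain fails to grow it has reached every
class; so it grows by at least one class per step until all `N` classes are reached, and words of
length at most `k - 1` already meet `min k N` classes. -/

theorem mnEquiv.append_right {α : Type} {L : Language α} {x y : List α} (h : mnEquiv L x y)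
    (z : List α) : mnEquiv L (x ++ z) (y ++ z) := fun t => by
  simpa only [List.append_assoc] using h (z ++ t)

def classesOfLengthLE {α : Type} (L : Language α) (m : ℕ) : Set (Quotient (mnSetoid L)) :=
  Quotient.mk (mnSetoid L) '' {w | w.length ≤ m}

section classesOfLengthLE

variable {α : Type} {L : Language α}

theorem classesOfLengthLE_mono {m n : ℕ} (hmn : m ≤ n) :
    classesOfLengthLE L m ⊆ classesOfLengthLE L n :=
  Set.image_mono fun _ hw => le_trans hw hmn

theorem classesOfLengthLE_eq_univ_of_succ_eq {m : ℕ}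
    (heq : classesOfLengthLE L (m + 1) = classesOfLengthLE L m) :
    classesOfLengthLE L m = Set.univ := by
  refine Set.eq_univ_of_forall fun q => Quotient.inductionOn q fun w => ?_
  induction w using List.reverseRecOn with
  | nil => exact ⟨[], by simp, rfl⟩
  | append_singleton u a ih =>
    obtain ⟨v, hv, hvu⟩ := ih
    rw [← heq]
    refine ⟨v ++ [a], by simpa using hv, Quotient.sound ?_⟩
    exact (Quotient.exact hvu).append_right [a]

theorem min_le_ncard_classesOfLengthLE [Finite (Quotient (mnSetoid L))] (m : ℕ) :
    min (m + 1) (mnIndex L) ≤ (classesOfLengthLE L m).ncard := by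
  induction m with
  | zero =>
    have hne : (classesOfLengthLE L 0).Nonempty := ⟨_, [], by simp, rfl⟩
    have := (Set.ncard_pos (Set.toFinite _)).mpr hne
    omega
  | succ m ih =>
    by_cases heq : classesOfLengthLE L (m + 1) = classesOfLengthLE L m
    · rw [heq, classesOfLengthLE_eq_univ_of_succ_eq heq, Set.ncard_univ, mnIndex]
      omega
    · have hlt : (classesOfLengthLE L m).ncard < (classesOfLengthLE L (m + 1)).ncard :=
        Set.ncard_lt_ncard ((classesOfLengthLE_mono m.le_succ).ssubset_of_ne (Ne.symm heq))
      omega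

end classesOfLengthLE

theorem Set.exists_finset_injOn_card_eq_of_le_ncard_image {β γ : Type} {f : β → γ} {s : Set β}
    {k : ℕ} (hfin : (f '' s).Finite) (hk : k ≤ (f '' s).ncard) :
    ∃ u : Finset β, ↑u ⊆ s ∧ Set.InjOn f u ∧ u.card = k := by
  classical
  obtain ⟨t, hts, htk⟩ := Set.exists_subset_card_eq hk
  have ht : t.Finite := hfin.subset hts
  obtain ⟨u, hus, hinj, himg⟩ := Finset.exists_subset_injOn_image_eq_of_surjOn s ht.toFinset
    (by simpa using (Set.surjOn_image f s).mono le_rfl hts)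
  refine ⟨u, hus, hinj, ?_⟩
  rw [← Finset.card_image_of_injOn hinj, himg, ← htk, Set.ncard_eq_toFinset_card t ht]

theorem stmt0 {α : Type} (L : Language α) (N : ℕ)
    (hreg : Finite (Quotient (mnSetoid L))) (hN : mnIndex L = N)
    (k : ℕ) (hk1 : 1 ≤ k) (hkN : k ≤ N) :
    ∃ H : Finset (List α), H.card = k ∧
      (∀ h ∈ H, h.length ≤ k - 1) ∧
      (∀ h₁ ∈ H, ∀ h₂ ∈ H, h₁ ≠ h₂ → ¬ mnEquiv L h₁ h₂) := by
  have hk : k ≤ (classesOfLengthLE L (k - 1)).ncard := by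
    have := min_le_ncard_classesOfLengthLE (L := L) (k - 1)
    omega
  obtain ⟨H, hshort, hinj, hcard⟩ :=
    Set.exists_finset_injOn_card_eq_of_le_ncard_image (Set.toFinite _) hk
  refine ⟨H, hcard, fun h hh => hshort hh, fun h₁ hh₁ h₂ hh₂ hne hequiv => ?_⟩
  exact hne (hinj hh₁ hh₂ (Quotient.sound hequiv))
end

section
/- Let 𝒜₁, 𝒜₂ be DFAs over Σ, and let 𝒜 = ⟨Σ, Q, q₀, δ, ∅⟩ be a DFA structure with empty acceptance set. Then F_{𝒜,𝒜₁} ∩ F_{𝒜,𝒜₂} = ∅ if and only if there exists a set F ⊆ Q such that the DFA 𝒜_F = ⟨Σ, Q, q₀, δ, F⟩ separates ⟨𝒜₁, 𝒜₂⟩, i.e., L(𝒜₁) ⊆ L(𝒜_F) and L(𝒜_F) ∩ L(𝒜₂) = ∅. -/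
/-- `reachSet A A'` is the set of states of `A` reachable from the initial state of `A`
by reading some word accepted by `A'`. -/
def reachSet {α Q Q' : Type} (A : DFA α Q) (A' : DFA α Q') : Set Q :=
  {q | ∃ w ∈ A'.accepts, A.eval w = q}

/-!
Since `𝒜_F` runs exactly as `𝒜` does, `L(𝒜₁) ⊆ L(𝒜_F)` says `F_{𝒜,𝒜₁} ⊆ F` and
`L(𝒜_F) ∩ L(𝒜₂) = ∅` says `F ∩ F_{𝒜,𝒜₂} = ∅`. Such an `F` exists iff the two reachable sets
are disjoint, and then `F = F_{𝒜,𝒜₁}` is a witness.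
-/

namespace DFA

variable {α Q Q' : Type} (A : DFA α Q) (F : Set Q)

theorem mem_accepts_mk_iff (w : List α) :
    w ∈ (DFA.mk A.step A.start F).accepts ↔ A.eval w ∈ F :=
  Iff.rfl

theorem accepts_le_mk_iff_reachSet_subset (A' : DFA α Q') :
    A'.accepts ≤ (DFA.mk A.step A.start F).accepts ↔ reachSet A A' ⊆ F := by
  constructor
  · rintro h _ ⟨w, hw, rfl⟩
    exact h hw
  · intro h w hw
    exact h ⟨w, hw, rfl⟩

theorem forall_notMem_accepts_mk_and_iff_disjoint_reachSet (A' : DFA α Q') :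
    (∀ w, ¬ (w ∈ (DFA.mk A.step A.start F).accepts ∧ w ∈ A'.accepts)) ↔
      Disjoint F (reachSet A A') := by
  simp only [Set.disjoint_left, mem_accepts_mk_iff]
  constructor
  · rintro h _ hq ⟨w, hw, rfl⟩
    exact h w ⟨hq, hw⟩
  · rintro h w ⟨hw, hw'⟩
    exact h hw ⟨w, hw', rfl⟩

end DFA

theorem Set.disjoint_iff_exists_superset_disjoint {β : Type*} (s t : Set β) :
    Disjoint s t ↔ ∃ u, s ⊆ u ∧ Disjoint u t :=
  ⟨fun h => ⟨s, subset_rfl, h⟩, fun ⟨_, hsu, hut⟩ => hut.mono_left hsu⟩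

theorem stmt3_general {α Q Q₁ Q₂ : Type} (A₁ : DFA α Q₁) (A₂ : DFA α Q₂)
    (A : DFA α Q) :
    reachSet A A₁ ∩ reachSet A A₂ = ∅ ↔
      ∃ F : Set Q,
        (∀ w ∈ A₁.accepts, w ∈ (DFA.mk A.step A.start F).accepts) ∧
        (∀ w, ¬ (w ∈ (DFA.mk A.step A.start F).accepts ∧ w ∈ A₂.accepts)) := by
  rw [← Set.disjoint_iff_inter_eq_empty, Set.disjoint_iff_exists_superset_disjoint]
  exact exists_congr fun F => and_congr
    (A.accepts_le_mk_iff_reachSet_subset F A₁).symm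
    (A.forall_notMem_accepts_mk_and_iff_disjoint_reachSet F A₂).symm

theorem stmt3 {α Q Q₁ Q₂ : Type} (A₁ : DFA α Q₁) (A₂ : DFA α Q₂)
    (A : DFA α Q) (hA : A.accept = ∅) :
    reachSet A A₁ ∩ reachSet A A₂ = ∅ ↔
      ∃ F : Set Q,
        (∀ w ∈ A₁.accepts, w ∈ (DFA.mk A.step A.start F).accepts) ∧
        (∀ w, ¬ (w ∈ (DFA.mk A.step A.start F).accepts ∧ w ∈ A₂.accepts)) :=
  stmt3_general A₁ A₂ A
end

section
/- If two words h₁, h₂ over Σ are not Myhill-Nerode equivalent with respect to a regular language L of index N, then there exists a distinguishing tail t with |t| ≤ N − 1, i.e., exactly one of h₁·t, h₂·t is in L. -/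
namespace Setoid

variable {β : Type*} {r s : Setoid β}

theorem surjective_quotientMap_id (h : r ≤ s) :
    Function.Surjective (Quotient.map id fun _ _ hab => h hab : Quotient r → Quotient s) :=
  Quotient.map_surjective _ Function.surjective_id

theorem card_quotient_le_of_le [Finite (Quotient r)] (h : r ≤ s) :
    Nat.card (Quotient s) ≤ Nat.card (Quotient r) :=
  Nat.card_le_card_of_surjective _ (surjective_quotientMap_id h)

theorem card_quotient_lt_of_lt [Finite (Quotient r)] (h : r < s) :
    Nat.card (Quotient s) < Nat.card (Quotient r) := by
  refine (card_quotient_le_of_le h.le).lt_of_ne fun hcard => ?_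
  obtain ⟨x, y, hs, hr⟩ : ∃ x y, s x y ∧ ¬ r x y := by
    simpa [Setoid.le_def] using h.not_ge
  have hbij : Function.Bijective (Quotient.map id fun _ _ hab => h.le hab :
      Quotient r → Quotient s) :=
    (Nat.bijective_iff_surjective_and_card _).mpr ⟨surjective_quotientMap_id h.le, hcard.symm⟩
  exact hr (Quotient.exact (hbij.injective (Quotient.sound hs)))

theorem exists_lt_card_succ_eq_of_antitone [Nonempty β] [Finite (Quotient r)]
    {s : ℕ → Setoid β} (hs : Antitone s) (hr : ∀ k, r ≤ s k) :
    ∃ k < Nat.card (Quotient r), s (k + 1) = s k := by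
  by_contra! hne
  have hfin (k : ℕ) : Finite (Quotient (s k)) :=
    Finite.of_surjective _ (surjective_quotientMap_id (hr k))
  have hgrow : ∀ k ≤ Nat.card (Quotient r), k + 1 ≤ Nat.card (Quotient (s k)) := by
    intro k hk
    induction k with
    | zero =>
      exact Nat.one_le_iff_ne_zero.mpr (Nat.card_ne_zero.mpr ⟨⟨⟦Classical.arbitrary β⟧⟩, hfin 0⟩)
    | succ k ih =>
      have hlt : s (k + 1) < s k := (hs k.le_succ).lt_of_ne (hne k (by omega))
      have := card_quotient_lt_of_lt hlt
      omega
  have := hgrow _ le_rfl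
  have := card_quotient_le_of_le (hr (Nat.card (Quotient r)))
  omega

end Setoid

namespace Language

variable {α : Type} (L : Language α)

def tailSetoid (k : ℕ) : Setoid (List α) where
  r x y := ∀ t : List α, t.length ≤ k → (x ++ t ∈ L ↔ y ++ t ∈ L)
  iseqv := ⟨fun _ _ _ => Iff.rfl, fun h t ht => (h t ht).symm,
    fun h h' t ht => (h t ht).trans (h' t ht)⟩

theorem tailSetoid_antitone : Antitone L.tailSetoid :=
  fun _ _ hjk _ _ h t ht => h t (ht.trans hjk)

theorem mnSetoid_le_tailSetoid (k : ℕ) : mnSetoid L ≤ L.tailSetoid k :=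
  fun _ _ h t _ => h t

theorem tailSetoid_succ_iff {k : ℕ} {x y : List α} :
    L.tailSetoid (k + 1) x y ↔
      (x ∈ L ↔ y ∈ L) ∧ ∀ a, L.tailSetoid k (x ++ [a]) (y ++ [a]) := by
  constructor
  · intro h
    refine ⟨by simpa using h [] (by simp), fun a t ht => ?_⟩
    simpa using h (a :: t) (by simpa using ht)
  · rintro ⟨hnil, hcons⟩ (_ | ⟨a, t⟩) ht
    · simpa using hnil
    · simpa using hcons a t (by simpa using ht)

theorem tailSetoid_eq_mnSetoid_of_succ_eq {k : ℕ} (h : L.tailSetoid (k + 1) = L.tailSetoid k) :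
    L.tailSetoid k = mnSetoid L := by
  have hconst : ∀ n, L.tailSetoid (k + n) = L.tailSetoid k := by
    intro n
    induction n with
    | zero => rfl
    | succ n ih =>
      ext x y
      rw [← add_assoc, tailSetoid_succ_iff, ih, ← tailSetoid_succ_iff, h]
  refine le_antisymm (fun {x y} hxy t => ?_) (mnSetoid_le_tailSetoid L k)
  rw [← hconst t.length] at hxy
  exact hxy t (by omega)

end Language

theorem stmt8 {α : Type} (L : Language α) (N : ℕ)
    (hreg : Finite (Quotient (mnSetoid L))) (hN : mnIndex L = N)
    (h₁ h₂ : List α) (h : ¬ mnEquiv L h₁ h₂) :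
    ∃ t : List α, t.length ≤ N - 1 ∧ Xor' (h₁ ++ t ∈ L) (h₂ ++ t ∈ L) := by
  obtain ⟨k, hkN, hstable⟩ :=
    Setoid.exists_lt_card_succ_eq_of_antitone L.tailSetoid_antitone L.mnSetoid_le_tailSetoid
  have hk : k ≤ N - 1 := by rw [← hN, mnIndex]; omega
  have hdist : ¬ ∀ t : List α, t.length ≤ N - 1 → (h₁ ++ t ∈ L ↔ h₂ ++ t ∈ L) := fun hE => by
    have := L.tailSetoid_antitone hk (x := h₁) (y := h₂) hE
    rw [L.tailSetoid_eq_mnSetoid_of_succ_eq hstable] at this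
    exact h this
  obtain ⟨t, ht, hne⟩ := not_forall₂.mp hdist
  exact ⟨t, ht, (xor_iff_not_iff _ _).mpr hne⟩
end

section
/- For every n ≥ 1, the language L_n = { aⁿ bᵢ bᵢ : 1 ≤ i ≤ n } over the alphabet Σ_n = {a, b₁, ..., b_n} has Myhill-Nerode index exactly 2n + 3. -/
/-- The alphabet `Σ_n = {a, b₁, …, b_n}`: `none` is the letter `a`,
`some i` is the letter `b_{i+1}`. -/
abbrev Sig (n : ℕ) := Option (Fin n)

/-- `L_n = { aⁿ bᵢ bᵢ : 1 ≤ i ≤ n }`. -/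
def Ln (n : ℕ) : Language (Sig n) :=
  { w | ∃ i : Fin n, w = List.replicate n none ++ [some i, some i] }

/-!
The right congruence classes of a language correspond to its left quotients, and for a DFA
accepting the language the left quotient of `w` is the language accepted from the state reached
on `w`. Hence the index is the number of states of any DFA for the language whose states are all
reachable and pairwise distinguishable. For `L_n` such a DFA has the `n + 1` states "read `aᵏ`"
(`k ≤ n`), the `n` states "read `aⁿ bᵢ`", an accepting state and a dead state.
-/

section MyhillNerode

variable {α : Type}

theorem mnSetoid_eq_ker_leftQuotient (L : Language α) :
    mnSetoid L = Setoid.ker L.leftQuotient := by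
  ext x y
  exact Set.ext_iff.symm

theorem mnIndex_eq_card_range_leftQuotient (L : Language α) :
    mnIndex L = Nat.card (Set.range L.leftQuotient) := by
  rw [mnIndex, mnSetoid_eq_ker_leftQuotient]
  exact Nat.card_congr (Setoid.quotientKerEquivRange _)

theorem DFA.mnIndex_accepts {σ : Type} (M : DFA α σ) (hreach : Function.Surjective M.eval)
    (hdist : Function.Injective M.acceptsFrom) : mnIndex M.accepts = Nat.card σ := by
  rw [mnIndex_eq_card_range_leftQuotient, Language.leftQuotient_accepts, hreach.range_comp,
    Nat.card_range_of_injective hdist]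

end MyhillNerode

namespace Ln

open List

/-- `inl (inl k)`: read `aᵏ`; `inl (inr i)`: read `aⁿ bᵢ`; `inr true`: accept; `inr false`: dead. -/
abbrev State (n : ℕ) := (Fin (n + 1) ⊕ Fin n) ⊕ Bool

variable {n : ℕ}

def step : State n → Sig n → State n
  | .inl (.inl k), none => if h : (k : ℕ) < n then .inl (.inl ⟨k + 1, by omega⟩) else .inr false
  | .inl (.inl k), some i => if (k : ℕ) = n then .inl (.inr i) else .inr false
  | .inl (.inr i), some j => if i = j then .inr true else .inr false
  | .inl (.inr _), none => .inr false
  | .inr _, _ => .inr false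

variable (n) in
def dfa : DFA (Sig n) (State n) where
  step := step
  start := .inl (.inl 0)
  accept := {.inr true}

def residual : State n → Language (Sig n)
  | .inl (.inl k) => {t | ∃ i : Fin n, t = replicate (n - k) none ++ [some i, some i]}
  | .inl (.inr i) => {t | t = [some i]}
  | .inr b => {t | b ∧ t = []}

variable {t : List (Sig n)}

@[simp] theorem mem_residual_inl_inl {k : Fin (n + 1)} :
    t ∈ residual (.inl (.inl k)) ↔ ∃ i : Fin n, t = replicate (n - k) none ++ [some i, some i] :=
  Iff.rfl

@[simp] theorem mem_residual_inl_inr {i : Fin n} : t ∈ residual (.inl (.inr i)) ↔ t = [some i] :=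
  Iff.rfl

@[simp] theorem mem_residual_inr {b : Bool} : t ∈ residual (.inr b) ↔ b ∧ t = [] :=
  Iff.rfl

theorem nil_mem_residual (s : State n) : [] ∈ residual s ↔ s = .inr true := by
  rcases s with (k | i) | b <;> simp

theorem cons_mem_residual (s : State n) (x : Sig n) :
    x :: t ∈ residual s ↔ t ∈ residual (step s x) := by
  rcases s with (k | i) | b
  · rcases x with _ | i
    · by_cases h : (k : ℕ) < n
      · have hsucc : n - k = n - (k + 1) + 1 := by omega
        simp [step, h, hsucc, replicate_succ]
      · have hzero : n - k = 0 := by omega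
        simp [step, h, hzero]
    · by_cases h : (k : ℕ) = n
      · simp [step, h]
      · have hsucc : n - k = n - (k + 1) + 1 := by omega
        simp [step, h, hsucc, replicate_succ]
  · rcases x with _ | j
    · simp [step]
    · rcases eq_or_ne i j with rfl | h
      · simp [step]
      · simp [step, h, h.symm]
  · simp [step]

theorem acceptsFrom_dfa : (dfa n).acceptsFrom = residual := by
  funext s
  ext t
  induction t generalizing s with
  | nil => simp [DFA.mem_acceptsFrom, dfa, nil_mem_residual]
  | cons x t ih =>
    rw [cons_mem_residual, ← ih, DFA.mem_acceptsFrom, DFA.mem_acceptsFrom, DFA.evalFrom_cons]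
    rfl

theorem accepts_dfa : (dfa n).accepts = Ln n := by
  rw [DFA.accepts, acceptsFrom_dfa]
  rfl

theorem eval_dfa_replicate {k : ℕ} (hk : k ≤ n) :
    (dfa n).eval (replicate k none) = .inl (.inl ⟨k, by omega⟩) := by
  induction k with
  | zero => rfl
  | succ k ih =>
    rw [replicate_succ', DFA.eval_append_singleton, ih (by omega)]
    simp [dfa, step, Nat.lt_of_succ_le hk]

theorem eval_dfa_surjective (hn : 1 ≤ n) : Function.Surjective (dfa n).eval := by
  have hlast := eval_dfa_replicate (le_refl n)
  rintro ((k | i) | b)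
  · exact ⟨replicate k none, eval_dfa_replicate k.is_le⟩
  · refine ⟨replicate n none ++ [some i], ?_⟩
    rw [DFA.eval_append_singleton, hlast]
    simp [dfa, step]
  · cases b
    · refine ⟨replicate (n + 1) none, ?_⟩
      rw [replicate_succ', DFA.eval_append_singleton, hlast]
      simp [dfa, step]
    · have hmem : replicate n none ++ [some ⟨0, hn⟩, some ⟨0, hn⟩] ∈ (dfa n).accepts := by
        rw [accepts_dfa]
        exact ⟨_, rfl⟩
      exact ⟨_, (DFA.mem_accepts _).mp hmem⟩

def witness (i : Fin n) : State n → List (Sig n)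
  | .inl (.inl k) => replicate (n - k) none ++ [some i, some i]
  | .inl (.inr j) => [some j]
  | .inr _ => []

theorem witness_mem_residual (i : Fin n) {s : State n} (hs : s ≠ .inr false) :
    witness i s ∈ residual s := by
  rcases s with (k | j) | (_ | _) <;> simp_all [witness]

theorem eq_of_witness_mem_residual (i : Fin n) {s s' : State n} (hs : s ≠ .inr false)
    (h : witness i s ∈ residual s') : s = s' := by
  rcases s with (k | j) | (_ | _) <;> rcases s' with (k' | j') | (_ | _)
  all_goals simp_all [witness]
  -- the remaining cases are told apart by word length
  all_goals
    try obtain ⟨_, h⟩ := h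
    have hlen := congrArg length h
    simp only [length_append, length_replicate, length_cons, length_nil] at hlen
    omega

theorem residual_injective (hn : 1 ≤ n) : Function.Injective (residual (n := n)) := by
  intro s s' he
  let i : Fin n := ⟨0, hn⟩
  by_cases hs : s = .inr false
  · by_cases hs' : s' = .inr false
    · rw [hs, hs']
    · exact (eq_of_witness_mem_residual i hs' (he ▸ witness_mem_residual i hs')).symm
  · exact eq_of_witness_mem_residual i hs (he ▸ witness_mem_residual i hs)

end Ln

theorem stmt9 (n : ℕ) (hn : 1 ≤ n) : mnIndex (Ln n) = 2 * n + 3 := by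
  rw [← Ln.accepts_dfa, DFA.mnIndex_accepts _ (Ln.eval_dfa_surjective hn)
    (Ln.acceptsFrom_dfa ▸ Ln.residual_injective hn)]
  simp
  omega
end

section
/- Let 𝒜₁, 𝒜₂ be DFAs over Σ with finite nonempty languages and 0 ∉ Σ, and let 𝒜₁′, 𝒜₂′ be their extensions over Σ ∪ {0} obtained by sending every state to a rejecting sink on letter 0. Then for every k ≥ 1, ⟨𝒜₁, 𝒜₂⟩ is separable by a DFA with at most k states iff ⟨𝒜₁′, 𝒜₂′⟩ is strictly separable by a DFA with at most k states. -/
/-!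
A separator `A` of `⟨A₁, A₂⟩` becomes a strict separator of the extended pair once it is made
to ignore the letter `0` (same states): for `u₁ ∈ L(A₁)` and `u₂ ∈ L(A₂)`, the word `u₁0` is
accepted but lies outside `L(A₁′)`, and `u₂0` is rejected but lies outside `L(A₂′)`, since every
word of `L(Aᵢ′)` is `0`-free. Conversely, restricting a strict separator of the extended pair to
the letters of `Σ` separates `⟨A₁, A₂⟩`, again with the same states.
-/

/-- The DFA over `Σ ∪ {0}` (modeled by `Option α`, `none` is the letter `0`) obtained
from `A` by adding a rejecting sink (the state `none`) and sending every state to the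
rejecting sink on the letter `0`. -/
def extDFA {α Q : Type} (A : DFA α Q) : DFA (Option α) (Option Q) where
  step q o :=
    match q, o with
    | some q, some σ => some (A.step q σ)
    | _, _ => none
  start := some A.start
  accept := { q | ∃ p ∈ A.accept, q = some p }

/-- `L` strictly separates `⟨L₁, L₂⟩`: `L₁ ⊊ L ⊊ comp(L₂)`. -/
def StrictSep {β : Type} (L₁ L L₂ : Language β) : Prop :=
  (∀ w ∈ L₁, w ∈ L) ∧ (∃ w ∈ L, w ∉ L₁) ∧ (∀ w ∈ L, w ∉ L₂) ∧ (∃ w, w ∉ L ∧ w ∉ L₂)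

namespace DFA

variable {α σ : Type}

def liftOption (M : DFA α σ) : DFA (Option α) σ where
  step s a := a.elim s (M.step s)
  start := M.start
  accept := M.accept

theorem evalFrom_liftOption (M : DFA α σ) (s : σ) (x : List (Option α)) :
    M.liftOption.evalFrom s x = M.evalFrom s x.reduceOption := by
  induction x generalizing s with
  | nil => rfl
  | cons a x ih =>
    cases a with
    | none => exact ih s
    | some a => exact ih (M.step s a)

theorem accepts_liftOption (M : DFA α σ) :
    M.liftOption.accepts = List.reduceOption ⁻¹' M.accepts := by
  ext x
  exact Iff.of_eq (congrArg (· ∈ M.accept) (M.evalFrom_liftOption M.start x))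

end DFA

section extDFA

variable {α Q : Type} (A : DFA α Q)

theorem evalFrom_extDFA_none (x : List (Option α)) : (extDFA A).evalFrom none x = none := by
  induction x with
  | nil => rfl
  | cons a x ih => exact ih

theorem evalFrom_extDFA_map_some (q : Q) (v : List α) :
    (extDFA A).evalFrom (some q) (v.map some) = some (A.evalFrom q v) := by
  induction v generalizing q with
  | nil => rfl
  | cons a v ih => exact ih (A.step q a)

theorem exists_map_some_of_evalFrom_extDFA_eq_some {q p : Q} {x : List (Option α)}
    (h : (extDFA A).evalFrom (some q) x = some p) :
    ∃ v : List α, x = v.map some ∧ A.evalFrom q v = p := by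
  induction x generalizing q with
  | nil => exact ⟨[], rfl, Option.some_injective _ h⟩
  | cons a x ih =>
    cases a with
    | none => exact absurd ((evalFrom_extDFA_none A x).symm.trans h) nofun
    | some a =>
      obtain ⟨v, rfl, hv⟩ := ih h
      exact ⟨a :: v, rfl, hv⟩

theorem accepts_extDFA : (extDFA A).accepts = List.map some '' A.accepts := by
  ext x
  constructor
  · rintro ⟨p, hp, hx⟩
    obtain ⟨v, rfl, hv⟩ := exists_map_some_of_evalFrom_extDFA_eq_some A hx
    exact ⟨v, show A.evalFrom A.start v ∈ A.accept from hv ▸ hp, rfl⟩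
  · rintro ⟨v, hv, rfl⟩
    exact ⟨A.eval v, hv, evalFrom_extDFA_map_some A A.start v⟩

end extDFA

theorem List.reduceOption_map_some {α : Type} (v : List α) : (v.map some).reduceOption = v := by
  simp [List.reduceOption, List.filterMap_map]

section StrictSep

variable {α : Type} {L₁ L L₂ : Set (List α)}

theorem map_some_append_none_notMem_image (L : Set (List α)) (v : List α) :
    v.map some ++ [none] ∉ List.map some '' L := by
  rintro ⟨u, -, hu⟩
  have : none ∈ u.map some := hu ▸ List.mem_append_right _ (List.mem_singleton_self none)
  simp at this

theorem strictSep_image_map_some_of_subset (h₁ : L₁ ⊆ L) (h₂ : Disjoint L L₂)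
    {u₁ u₂ : List α} (hu₁ : u₁ ∈ L₁) (hu₂ : u₂ ∈ L₂) :
    StrictSep (List.map some '' L₁) (List.reduceOption ⁻¹' L) (List.map some '' L₂) := by
  have reduceOption_tagged (u : List α) : (u.map some ++ [none]).reduceOption = u := by
    simp [List.reduceOption_append, List.reduceOption_map_some]
  refine ⟨?_, ⟨u₁.map some ++ [none], ?_, map_some_append_none_notMem_image L₁ u₁⟩, ?_,
    ⟨u₂.map some ++ [none], ?_, map_some_append_none_notMem_image L₂ u₂⟩⟩
  · rintro _ ⟨v, hv, rfl⟩
    show (v.map some).reduceOption ∈ L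
    rw [List.reduceOption_map_some]
    exact h₁ hv
  · show (u₁.map some ++ [none]).reduceOption ∈ L
    rw [reduceOption_tagged]
    exact h₁ hu₁
  · rintro _ hw ⟨v, hv, rfl⟩
    replace hw : (v.map some).reduceOption ∈ L := hw
    rw [List.reduceOption_map_some] at hw
    exact h₂.notMem_of_mem_right hv hw
  · show (u₂.map some ++ [none]).reduceOption ∉ L
    rw [reduceOption_tagged]
    exact h₂.notMem_of_mem_right hu₂

theorem subset_preimage_and_disjoint_of_strictSep {L' : Set (List (Option α))}
    (h : StrictSep (List.map some '' L₁) L' (List.map some '' L₂)) :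
    L₁ ⊆ List.map some ⁻¹' L' ∧ Disjoint (List.map some ⁻¹' L') L₂ :=
  ⟨fun v hv ↦ h.1 _ ⟨v, hv, rfl⟩,
    Set.disjoint_left.2 fun v hv hv₂ ↦ h.2.2.1 _ hv ⟨v, hv₂, rfl⟩⟩

end StrictSep

theorem stmt14_general {α : Type} {Q₁ Q₂ : Type}
    (A₁ : DFA α Q₁) (A₂ : DFA α Q₂)
    (hne₁ : ∃ w, w ∈ A₁.accepts)
    (hne₂ : ∃ w, w ∈ A₂.accepts)
    (k : ℕ) :
    (∃ (Q : Type) (_ : Fintype Q) (A : DFA α Q), Fintype.card Q ≤ k ∧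
        (∀ w ∈ A₁.accepts, w ∈ A.accepts) ∧ (∀ w ∈ A.accepts, w ∉ A₂.accepts)) ↔
    (∃ (Q : Type) (_ : Fintype Q) (B : DFA (Option α) Q), Fintype.card Q ≤ k ∧
        StrictSep (extDFA A₁).accepts B.accepts (extDFA A₂).accepts) := by
  obtain ⟨u₁, hu₁⟩ := hne₁
  obtain ⟨u₂, hu₂⟩ := hne₂
  rw [accepts_extDFA, accepts_extDFA]
  constructor
  · rintro ⟨Q, _, A, hcard, hsub, hsep⟩
    refine ⟨Q, _, A.liftOption, hcard, ?_⟩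
    rw [DFA.accepts_liftOption]
    exact strictSep_image_map_some_of_subset hsub (Set.disjoint_left.2 hsep) hu₁ hu₂
  · rintro ⟨Q, _, B, hcard, hB⟩
    obtain ⟨hsub, hsep⟩ := subset_preimage_and_disjoint_of_strictSep hB
    rw [← DFA.accepts_comap] at hsub hsep
    exact ⟨Q, _, B.comap some, hcard, hsub, Set.disjoint_left.1 hsep⟩

theorem stmt14 {α : Type} {Q₁ Q₂ : Type} [Fintype Q₁] [Fintype Q₂]
    (A₁ : DFA α Q₁) (A₂ : DFA α Q₂)
    (hfin₁ : { w | w ∈ A₁.accepts }.Finite) (hne₁ : ∃ w, w ∈ A₁.accepts)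
    (hfin₂ : { w | w ∈ A₂.accepts }.Finite) (hne₂ : ∃ w, w ∈ A₂.accepts)
    (k : ℕ) (hk : 1 ≤ k) :
    (∃ (Q : Type) (_ : Fintype Q) (A : DFA α Q), Fintype.card Q ≤ k ∧
        (∀ w ∈ A₁.accepts, w ∈ A.accepts) ∧ (∀ w ∈ A.accepts, w ∉ A₂.accepts)) ↔
    (∃ (Q : Type) (_ : Fintype Q) (B : DFA (Option α) Q), Fintype.card Q ≤ k ∧
        StrictSep (extDFA A₁).accepts B.accepts (extDFA A₂).accepts) :=
  stmt14_general A₁ A₂ hne₁ hne₂ k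
end

section
/- If ⟨𝒜₁, 𝒜₂⟩ is strictly separable by some DFA, then there exists a strict separator DFA whose number of states is at most polynomial in |𝒜₁| and |𝒜₂|; specifically, one can take a DFA recognizing L(𝒜₁) ∪ {w} where w is a word in comp(L(𝒜₁) ∪ L(𝒜₂)) accepted along a simple path of the product automaton, so |w| ≤ |𝒜₁|·|𝒜₂|. -/
/-!
A strict separator `L` yields two distinct words outside `L(𝒜₁) ∪ L(𝒜₂)`: one in `L \ L(𝒜₁)`
and one outside `L`. Pumping down in the product automaton recognising the complement of
`L(𝒜₁) ∪ L(𝒜₂)` gives such a word `w` with `|w| ≤ |𝒜₁|·|𝒜₂|`. Then `L(𝒜₁) ∪ {w}` separates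
strictly, since one of the two words differs from `w`, and it is recognised by the product of `𝒜₁`
with the `(|w| + 2)`-state automaton of `{w}`.
-/

theorem List.append_singleton_prefix_iff {α : Type*} {v w : List α} {a : α} :
    v ++ [a] <+: w ↔ v <+: w ∧ w[v.length]? = some a := by
  constructor
  · intro h
    refine ⟨(List.prefix_append v [a]).trans h, ?_⟩
    obtain ⟨t, rfl⟩ := h
    simp
  · rintro ⟨hv, ha⟩
    rw [List.prefix_iff_eq_take] at hv ⊢
    rw [List.length_append, List.length_singleton, List.take_add_one, ← hv, ha]
    rfl

namespace Language

variable {α : Type*}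

@[simp]
theorem mem_singleton_iff {x w : List α} : x ∈ ({w} : Language α) ↔ x = w :=
  Iff.rfl

@[simp]
theorem mem_compl_iff {x : List α} {l : Language α} : x ∈ lᶜ ↔ x ∉ l :=
  Iff.rfl

end Language

namespace DFA

variable {α σ : Type*}

theorem exists_mem_accepts_length_le_card [Fintype σ] (M : DFA α σ) {x : List α}
    (hx : x ∈ M.accepts) : ∃ y ∈ M.accepts, y.length ≤ Fintype.card σ := by
  classical
  have hex : ∃ n, ∃ y ∈ M.accepts, y.length = n := ⟨_, x, hx, rfl⟩
  obtain ⟨y, hy, hlen⟩ := Nat.find_spec hex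
  refine ⟨y, hy, le_of_not_gt fun hcard => ?_⟩
  obtain ⟨q, a, b, c, rfl, -, hb, ha, -, hc⟩ := M.evalFrom_split hcard.le (rfl : _ = M.eval y)
  have hac : a ++ c ∈ M.accepts := by
    rw [mem_accepts, eval, evalFrom_of_append, ha, hc]
    exact hy
  refine Nat.find_min hex ?_ ⟨a ++ c, hac, rfl⟩
  rw [← hlen]
  simp [List.length_pos_iff.mpr hb]

def ofWord [DecidableEq α] (w : List α) : DFA α (Option (Fin (w.length + 1))) where
  step s a := s.bind fun i =>
    if h : w[i.val]? = some a then
      some ⟨i + 1, by have := (List.getElem?_eq_some_iff.1 h).1; omega⟩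
    else none
  start := some 0
  accept := {some (Fin.last _)}

variable [DecidableEq α]

theorem eval_ofWord (w v : List α) :
    (ofWord w).eval v =
      if h : v <+: w then some ⟨v.length, Nat.lt_succ_of_le h.length_le⟩ else none := by
  induction v using List.reverseRecOn with
  | nil => simp [ofWord]
  | append_singleton v a ih =>
    rw [eval_append_singleton, ih]
    by_cases hv : v <+: w <;> simp [ofWord, hv, List.append_singleton_prefix_iff]

theorem accepts_ofWord (w : List α) : (ofWord w).accepts = {w} := by
  ext v
  rw [mem_accepts, eval_ofWord, Language.mem_singleton_iff]
  constructor
  · intro hv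
    split_ifs at hv with hpre
    · exact hpre.eq_of_length (by simpa [ofWord, Fin.ext_iff] using hv)
    · simp [ofWord] at hv
  · rintro rfl
    simp [ofWord, Fin.ext_iff]

end DFA

theorem StrictSep.add_singleton {β : Type} {L₁ L L₂ : Language β} (hL : StrictSep L₁ L L₂)
    {w : List β} (hw₁ : w ∉ L₁) (hw₂ : w ∉ L₂) : StrictSep L₁ (L₁ + {w}) L₂ := by
  obtain ⟨hsub, ⟨u, huL, hu₁⟩, hdisj, ⟨v, hvL, hv₂⟩⟩ := hL
  simp only [StrictSep, Language.mem_add, Language.mem_singleton_iff]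
  refine ⟨fun x hx => .inl hx, ⟨w, .inr rfl, hw₁⟩, ?_, ?_⟩
  · rintro x (hx | rfl)
    exacts [hdisj x (hsub x hx), hw₂]
  · -- `u ∈ L` and `v ∉ L`, so at most one of them is `w`
    by_cases hwu : u = w
    · exact ⟨v, by rintro (hv | rfl); exacts [hvL (hsub v hv), hvL (hwu ▸ huL)], hv₂⟩
    · exact ⟨u, by rintro (hu | rfl); exacts [hu₁ hu, hwu rfl], hdisj u huL⟩

theorem stmt16 {α : Type} {Q₁ Q₂ : Type} [Fintype Q₁] [Fintype Q₂]
    (A₁ : DFA α Q₁) (A₂ : DFA α Q₂)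
    (h : ∃ L : Language α, StrictSep A₁.accepts L A₂.accepts) :
    ∃ w : List α, w ∉ A₁.accepts ∧ w ∉ A₂.accepts ∧
      w.length ≤ Fintype.card Q₁ * Fintype.card Q₂ ∧
      ∃ (Q : Type) (_ : Fintype Q) (B : DFA α Q),
        Fintype.card Q ≤ Fintype.card Q₁ * (Fintype.card Q₁ * Fintype.card Q₂ + 2) ∧
        B.accepts = (fun v => v ∈ A₁.accepts ∨ v = w) ∧
        StrictSep A₁.accepts B.accepts A₂.accepts := by
  classical
  obtain ⟨L, hL⟩ := h
  obtain ⟨u, huL, hu₁⟩ := hL.2.1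
  have hu : u ∈ (A₁.union A₂)ᶜ.accepts := by
    simpa [Language.mem_add] using ⟨hu₁, hL.2.2.1 u huL⟩
  obtain ⟨w, hw, hwlen⟩ := (A₁.union A₂)ᶜ.exists_mem_accepts_length_le_card hu
  rw [Fintype.card_prod] at hwlen
  simp only [DFA.accepts_compl, DFA.accepts_union, Language.mem_compl_iff, Language.mem_add,
    not_or] at hw
  refine ⟨w, hw.1, hw.2, hwlen, _, inferInstance, A₁.union (DFA.ofWord w), ?_, ?_, ?_⟩
  · simp only [Fintype.card_prod, Fintype.card_option, Fintype.card_fin]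
    exact Nat.mul_le_mul_left _ (by omega)
  · rw [DFA.accepts_union, DFA.accepts_ofWord]
    rfl
  · rw [DFA.accepts_union, DFA.accepts_ofWord]
    exact hL.add_singleton hw.1 hw.2
end

section
/- For every n ≥ 1 and the language L_n = { aⁿ bᵢ² : 1 ≤ i ≤ n } over Σ_n = {a, b₁, ..., b_n}, and for every pair 1 ≤ i ≠ j ≤ n: the words aⁿbᵢ and aⁿbⱼ are not Myhill-Nerode equivalent with respect to L_n, with distinguishing tails bᵢ and bⱼ; moreover, the language L_n with the classes of aⁿbᵢ and aⁿbⱼ merged is still recognizable by a DFA with index(L_n) − 1 states. -/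
/-
Both languages in question have the shape `kerLang r = {aⁿ b_u b_v : r u = r v}` for a map
`r : Fin n → β` on the letters `b`: `L_n` is `kerLang id`, and merging the classes of `aⁿbᵢ` and
`aⁿbⱼ` yields `kerLang r` for the map `r` sending `j` to `i`. For surjective `r` the left quotients
of `kerLang r` are pairwise distinct and are exactly the quotients by `aᵏ` (`k ≤ n`), one per value
`s` of `r` (by `aⁿ b_u` with `r u = s`), `{ε}` and `∅`, so the Myhill–Nerode index is
`n + 1 + |β| + 2`: `2n + 3` for `L_n` and `2n + 2` after the merge. The automaton of left quotients
of the merged language then has `index(L_n) − 1` states.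
-/

open Function

theorem mnEquiv_iff_leftQuotient_eq {α : Type} {L : Language α} {x y : List α} :
    mnEquiv L x y ↔ L.leftQuotient x = L.leftQuotient y := by
  simp only [mnEquiv, Language.ext_iff, Language.mem_leftQuotient]

theorem mnIndex_eq_natCard_range_leftQuotient {α : Type} (L : Language α) :
    mnIndex L = Nat.card (Set.range L.leftQuotient) := by
  have : mnSetoid L = Setoid.ker L.leftQuotient :=
    Setoid.ext fun _ _ => mnEquiv_iff_leftQuotient_eq
  rw [mnIndex, this]
  exact Nat.card_congr (Setoid.quotientKerEquivRange _)

theorem exists_dfa_card_eq_mnIndex {α : Type} (L : Language α)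
    (hL : (Set.range L.leftQuotient).Finite) :
    ∃ (Q : Type) (_ : Fintype Q) (A : DFA α Q), Fintype.card Q = mnIndex L ∧ A.accepts = L :=
  ⟨_, hL.fintype, L.toDFA,
    by rw [mnIndex_eq_natCard_range_leftQuotient, Fintype.card_eq_nat_card], L.accepts_toDFA⟩

section KerLang

variable {n : ℕ} {β : Type*} (r : Fin n → β)

def kerLang : Language (Sig n) :=
  {w | ∃ u v, r u = r v ∧ w = List.replicate n none ++ [some u, some v]}

def kerResidual : Fin (n + 1) ⊕ β ⊕ Bool → Language (Sig n)
  | .inl k => {t | ∃ u v, r u = r v ∧ t = List.replicate (n - k) none ++ [some u, some v]}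
  | .inr (.inl s) => {t | ∃ v, r v = s ∧ t = [some v]}
  | .inr (.inr true) => 1
  | .inr (.inr false) => 0

variable {r}

theorem mem_kerLang {w : List (Sig n)} :
    w ∈ kerLang r ↔ ∃ u v, r u = r v ∧ w = List.replicate n none ++ [some u, some v] :=
  Iff.rfl

@[simp]
theorem mem_kerResidual_inl {k : Fin (n + 1)} {t : List (Sig n)} :
    t ∈ kerResidual r (.inl k) ↔
      ∃ u v, r u = r v ∧ t = List.replicate (n - k) none ++ [some u, some v] :=
  Iff.rfl

@[simp]
theorem mem_kerResidual_inr_inl {s : β} {t : List (Sig n)} :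
    t ∈ kerResidual r (.inr (.inl s)) ↔ ∃ v, r v = s ∧ t = [some v] :=
  Iff.rfl

@[simp]
theorem kerResidual_inr_inr_true : kerResidual r (.inr (.inr true)) = 1 :=
  rfl

@[simp]
theorem kerResidual_inr_inr_false : kerResidual r (.inr (.inr false)) = 0 :=
  rfl

theorem replicate_append_pair_mem_kerLang_iff {u v : Fin n} :
    List.replicate n none ++ [some u, some v] ∈ kerLang r ↔ r u = r v := by
  simp [mem_kerLang]

theorem length_of_mem_kerLang {w : List (Sig n)} (hw : w ∈ kerLang r) : w.length = n + 2 := by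
  obtain ⟨u, v, -, rfl⟩ := hw
  simp

variable (r)

theorem leftQuotient_kerLang_replicate (k : Fin (n + 1)) :
    (kerLang r).leftQuotient (List.replicate k none) = kerResidual r (.inl k) := by
  have hsplit : List.replicate n (none : Sig n) =
      List.replicate k none ++ List.replicate (n - k) none := by
    rw [List.replicate_append_replicate]; congr; omega
  ext t
  simp only [Language.mem_leftQuotient, mem_kerLang, hsplit, List.append_assoc,
    List.append_cancel_left_eq]
  rfl

theorem leftQuotient_kerLang_replicate_append (u : Fin n) :
    (kerLang r).leftQuotient (List.replicate n none ++ [some u]) =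
      kerResidual r (.inr (.inl (r u))) := by
  ext t
  simp only [Language.mem_leftQuotient, mem_kerLang, List.append_assoc, List.append_cancel_left_eq,
    List.cons_append, List.nil_append, List.cons.injEq, Option.some.injEq, ↓existsAndEq, true_and]
  exact exists_congr fun v => and_congr_left' eq_comm

theorem leftQuotient_kerLang_of_mem {w : List (Sig n)} (hw : w ∈ kerLang r) :
    (kerLang r).leftQuotient w = 1 := by
  ext t
  simp only [Language.mem_leftQuotient, Language.mem_one]
  refine ⟨fun ht => ?_, fun ht => by simpa [ht] using hw⟩
  have := length_of_mem_kerLang ht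
  rw [List.length_append, length_of_mem_kerLang hw] at this
  exact List.eq_nil_of_length_eq_zero (by omega)

theorem leftQuotient_kerLang_mem_range (w : List (Sig n)) :
    (kerLang r).leftQuotient w ∈ Set.range (kerResidual r) := by
  by_cases hempty : (kerLang r).leftQuotient w = 0
  · exact ⟨.inr (.inr false), hempty.symm⟩
  obtain ⟨t, ht⟩ : ∃ t, w ++ t ∈ kerLang r := by
    by_contra! h
    exact hempty (Language.ext fun t => iff_of_false (h t) (Language.notMem_zero t))
  obtain ⟨u, v, huv, he⟩ := ht
  rcases List.append_eq_append_iff.mp he with ⟨a, hrep, -⟩ | ⟨c, rfl, hc⟩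
  · obtain ⟨hlen, hw, -⟩ := List.append_eq_replicate_iff.mp hrep.symm
    exact ⟨.inl ⟨w.length, by omega⟩, by rw [← leftQuotient_kerLang_replicate, ← hw]⟩
  · match c, hc with
    | [], _ => exact ⟨.inl (Fin.last n), by simp [← leftQuotient_kerLang_replicate]⟩
    | [x], hc =>
      obtain ⟨rfl, -⟩ := List.cons_eq_cons.mp hc
      exact ⟨.inr (.inl (r u)), (leftQuotient_kerLang_replicate_append r u).symm⟩
    | [x, y], hc =>
      obtain ⟨rfl, rfl, -⟩ : some u = x ∧ some v = y ∧ _ := by simpa using hc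
      exact ⟨.inr (.inr true), (leftQuotient_kerLang_of_mem r ⟨u, v, huv, rfl⟩).symm⟩
    | _ :: _ :: _ :: _, hc => simp at hc

theorem eq_of_kerResidual_eq (hn : 0 < n) (hr : Surjective r) {x y : Fin (n + 1) ⊕ β ⊕ Bool}
    (h : kerResidual r x = kerResidual r y) (hx : x ≠ .inr (.inr false)) : x = y := by
  have u₀ : Fin n := ⟨0, hn⟩
  rcases x with k | s | (_ | _)
  · have hw : List.replicate (n - k) none ++ [some u₀, some u₀] ∈ kerResidual r y :=
      h ▸ ⟨u₀, u₀, rfl, rfl⟩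
    rcases y with k' | s' | (_ | _)
    · obtain ⟨_, _, -, he⟩ := hw
      have hlen := congrArg List.length he
      simp only [List.length_append, List.length_replicate, List.length_cons, List.length_nil]
        at hlen
      exact congrArg Sum.inl (Fin.ext (by omega))
    all_goals simp [Language.mem_one, List.append_eq_singleton_iff] at hw
  · obtain ⟨v, rfl⟩ := hr s
    have hw : [some v] ∈ kerResidual r y := h ▸ ⟨v, rfl, rfl⟩
    rcases y with k' | s' | (_ | _)
    · obtain ⟨_, _, -, he⟩ := hw
      simpa using congrArg List.length he
    · obtain ⟨_, rfl, ⟨⟩⟩ := hw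
      rfl
    all_goals simp [Language.mem_one] at hw
  · exact absurd rfl hx
  · have hw : [] ∈ kerResidual r y := h ▸ (Language.mem_one _).mpr rfl
    rcases y with k' | s' | (_ | _) <;>
      simp [Language.mem_one] at hw ⊢

theorem kerResidual_injective (hn : 0 < n) (hr : Surjective r) : Injective (kerResidual r) := by
  intro x y h
  by_cases hx : x = .inr (.inr false)
  · by_cases hy : y = .inr (.inr false)
    · rw [hx, hy]
    · exact (eq_of_kerResidual_eq r hn hr h.symm hy).symm
  · exact eq_of_kerResidual_eq r hn hr h hx

theorem range_leftQuotient_kerLang (hn : 0 < n) (hr : Surjective r) :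
    Set.range (kerLang r).leftQuotient = Set.range (kerResidual r) := by
  refine subset_antisymm (Set.range_subset_iff.mpr (leftQuotient_kerLang_mem_range r)) ?_
  rintro _ ⟨k | s | (_ | _), rfl⟩
  · exact ⟨_, leftQuotient_kerLang_replicate r k⟩
  · obtain ⟨u, rfl⟩ := hr s
    exact ⟨_, leftQuotient_kerLang_replicate_append r u⟩
  · refine ⟨List.replicate (n + 3) none, Language.ext fun t => iff_of_false (fun ht => ?_)
      (Language.notMem_zero t)⟩
    have := length_of_mem_kerLang ht
    rw [List.length_append, List.length_replicate] at this
    omega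
  · have u₀ : Fin n := ⟨0, hn⟩
    exact ⟨_, leftQuotient_kerLang_of_mem r ⟨u₀, u₀, rfl, rfl⟩⟩

theorem finite_range_leftQuotient_kerLang [Finite β] (hn : 0 < n) (hr : Surjective r) :
    (Set.range (kerLang r).leftQuotient).Finite :=
  range_leftQuotient_kerLang r hn hr ▸ Set.finite_range _

theorem mnIndex_kerLang [Finite β] (hn : 0 < n) (hr : Surjective r) :
    mnIndex (kerLang r) = n + Nat.card β + 3 := by
  rw [mnIndex_eq_natCard_range_leftQuotient, range_leftQuotient_kerLang r hn hr,
    Nat.card_range_of_injective (kerResidual_injective r hn hr)]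
  simp only [Nat.card_sum, Nat.card_eq_fintype_card, Fintype.card_fin, Fintype.card_bool]
  omega

end KerLang

theorem Ln_eq_kerLang_id (n : ℕ) : Ln n = kerLang (id : Fin n → Fin n) :=
  Language.ext fun w => by
    simp only [mem_kerLang, id, exists_eq_left']
    rfl

section Merge

variable {n : ℕ} {i j : Fin n} (hij : i ≠ j)

def mergeLetter (u : Fin n) : {m : Fin n // m ≠ j} :=
  if h : u = j then ⟨i, hij⟩ else ⟨u, h⟩

theorem mergeLetter_surjective : Surjective (mergeLetter hij) :=
  fun ⟨m, hm⟩ => ⟨m, dif_neg hm⟩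

theorem mergeLetter_eq_mergeLetter_iff {u v : Fin n} :
    mergeLetter hij u = mergeLetter hij v ↔ u = v ∨ u = i ∧ v = j ∨ u = j ∧ v = i := by
  unfold mergeLetter
  split_ifs <;> simp only [Subtype.mk.injEq] <;> grind

theorem kerLang_mergeLetter :
    kerLang (mergeLetter hij) = { w | w ∈ Ln n ∨
        w = List.replicate n none ++ [some i, some j] ∨
        w = List.replicate n none ++ [some j, some i] } :=
  Language.ext fun w => by
    simp only [mem_kerLang, mergeLetter_eq_mergeLetter_iff]
    show _ ↔ (∃ _, _) ∨ _ ∨ _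
    grind

end Merge

theorem stmt17 (n : ℕ) (hn : 1 ≤ n) (i j : Fin n) (hij : i ≠ j) :
    ¬ mnEquiv (Ln n) (List.replicate n none ++ [some i]) (List.replicate n none ++ [some j]) ∧
    (List.replicate n none ++ [some i]) ++ [some i] ∈ Ln n ∧
    (List.replicate n none ++ [some j]) ++ [some i] ∉ Ln n ∧
    (List.replicate n none ++ [some j]) ++ [some j] ∈ Ln n ∧
    (List.replicate n none ++ [some i]) ++ [some j] ∉ Ln n ∧
    ∃ (Q : Type) (_ : Fintype Q) (A : DFA (Sig n) Q),
      Fintype.card Q = mnIndex (Ln n) - 1 ∧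
      A.accepts = { w | w ∈ Ln n ∨
        w = List.replicate n none ++ [some i, some j] ∨
        w = List.replicate n none ++ [some j, some i] } := by
  have hmem (u v : Fin n) : (List.replicate n none ++ [some u]) ++ [some v] ∈ Ln n ↔ u = v := by
    rw [Ln_eq_kerLang_id, List.append_assoc]
    exact replicate_append_pair_mem_kerLang_iff
  have hji : (List.replicate n none ++ [some j]) ++ [some i] ∉ Ln n := (hmem j i).not.mpr hij.symm
  refine ⟨fun h => hji ((h [some i]).mp ((hmem i i).mpr rfl)), (hmem i i).mpr rfl, hji,
    (hmem j j).mpr rfl, (hmem i j).not.mpr hij, ?_⟩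
  have hsurj := mergeLetter_surjective hij
  obtain ⟨Q, instQ, A, hQ, hA⟩ := exists_dfa_card_eq_mnIndex _
    (finite_range_leftQuotient_kerLang _ hn hsurj)
  refine ⟨Q, instQ, A, ?_, hA.trans (kerLang_mergeLetter hij)⟩
  rw [hQ, mnIndex_kerLang _ hn hsurj, Ln_eq_kerLang_id, mnIndex_kerLang _ hn surjective_id]
  simp only [Nat.card_eq_fintype_card, Fintype.card_subtype_compl, Fintype.card_fin,
    Fintype.card_unique]
  omega
end
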